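/- Let φ(z) = (az+b)/(cz+d) (a,b,c,d ∈ ℂ, ad−bc ≠ 0) be a linear fractional self-map of 𝔻 having a fixed point on the unit circle ∂𝔻, let σ(z) = (conj(a)·z − conj(c))/(−conj(b)·z + conj(d)), and let ψ(z) = K_{σ(0)}(z). Then the weighted composition operator W_{ψ,φ} is normal on H² if and only if |b| = |c|. -/

import Mathlib

open scoped ComplexConjugate InnerProductSpace ENNReal NNReal
open Complex Metric

noncomputable section

abbrev H2 : Type := lp (fun _ : ℕ => ℂ) 2

namespace H2

/-- Evaluation of an element of `H²` (given by its sequence of Taylor coefficients)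
at a point `z` of the unit disk: `f(z) = ∑ aₙ zⁿ`. -/
def eval (f : H2) (z : ℂ) : ℂ := ∑' n : ℕ, (f : ∀ _ : ℕ, ℂ) n * z ^ n

/-- The Szegő kernel function `K_w(z) = 1/(1 - conj w * z)`. -/
def ker (w z : ℂ) : ℂ := (1 - conj w * z)⁻¹

lemma kernel_memℓp (w : ℂ) (hw : ‖w‖ < 1) :
    Memℓp (fun n : ℕ => (conj w) ^ n) 2 := by
  apply memℓp_gen
  have hsum : Summable (fun n : ℕ => (‖w‖ ^ 2) ^ n) :=
    summable_geometric_of_lt_one (by positivity) (by nlinarith [norm_nonneg w])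
  refine hsum.congr fun n => ?_
  have h2 : ((2 : ℝ≥0∞).toReal) = ((2 : ℕ) : ℝ) := by simp
  rw [h2, Real.rpow_natCast]
  simp [norm_pow, ← pow_mul, Nat.mul_comm]

/-- The reproducing kernel of `H²` at `w` in the unit disk, as an element of `H²`. -/
def kernel (w : ℂ) : H2 :=
  if hw : ‖w‖ < 1 then ⟨fun n : ℕ => (conj w) ^ n, kernel_memℓp w hw⟩ else 0

/-- `T` is the composition operator `C_φ` on `H²`. -/
def IsCompOp (φ : ℂ → ℂ) (T : H2 →L[ℂ] H2) : Prop :=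
  ∀ f : H2, ∀ z : ℂ, ‖z‖ < 1 → eval (T f) z = eval f (φ z)

/-- `W` is the weighted composition operator `W_{ψ,φ}` on `H²`. -/
def IsWCompOp (ψ φ : ℂ → ℂ) (W : H2 →L[ℂ] H2) : Prop :=
  ∀ f : H2, ∀ z : ℂ, ‖z‖ < 1 → eval (W f) z = ψ z * eval f (φ z)

/-- A conjugation on `H²`: a conjugate-linear involution satisfying `⟪Cx, Cy⟫ = ⟪y, x⟫`. -/
structure IsConjugation (C : H2 → H2) : Prop where
  map_add : ∀ x y : H2, C (x + y) = C x + C y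
  map_smul : ∀ (c : ℂ) (x : H2), C (c • x) = conj c • C x
  invol : ∀ x : H2, C (C x) = x
  inner_conj : ∀ x y : H2, ⟪C x, C y⟫_ℂ = ⟪y, x⟫_ℂ

/-- `T` is `C`-normal: `C T* T C = T T*`. -/
def CNormal (C : H2 → H2) (T : H2 →L[ℂ] H2) : Prop :=
  ∀ x : H2, C ((ContinuousLinearMap.adjoint T) (T (C x)))
      = T ((ContinuousLinearMap.adjoint T) x)

/-- `T` is a normal operator: `T* T = T T*`. -/
def IsNormalOp (T : H2 →L[ℂ] H2) : Prop :=
  (ContinuousLinearMap.adjoint T).comp T = T.comp (ContinuousLinearMap.adjoint T)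

/-- `T` is a unitary operator. -/
def IsUnitaryOp (T : H2 →L[ℂ] H2) : Prop :=
  T.comp (ContinuousLinearMap.adjoint T) = ContinuousLinearMap.id ℂ H2 ∧
  (ContinuousLinearMap.adjoint T).comp T = ContinuousLinearMap.id ℂ H2

/-- `C` is the conjugation `J_μ` on `H²`: `(J_μ f)(z) = conj (f (μ * conj z))`. -/
def IsJmu (μ : ℂ) (C : H2 → H2) : Prop :=
  ∀ f : H2, ∀ z : ℂ, ‖z‖ < 1 → eval (C f) z = conj (eval f (μ * conj z))

/-- `ξ_p(z) = √(1-|p|²) / (1 - conj p * z)`. -/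
def xi (p z : ℂ) : ℂ := (Real.sqrt (1 - ‖p‖ ^ 2) : ℂ) / (1 - conj p * z)

/-- `τ_p(z) = λ (p - z) / (1 - conj p * z)`. -/
def tau (p lam z : ℂ) : ℂ := lam * (p - z) / (1 - conj p * z)

/-- `C` is the conjugation `J W_{ξ_p, τ_p}` on `H²`:
`(C f)(z) = conj (ξ_p(conj z) * f (τ_p (conj z)))`. -/
def IsJW (p lam : ℂ) (C : H2 → H2) : Prop :=
  ∀ f : H2, ∀ z : ℂ, ‖z‖ < 1 →
    eval (C f) z = conj (xi p (conj z) * eval f (tau p lam (conj z)))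

end H2

/-!
Write `φ` and `σ` as the linear fractional maps of `M = !![a, b; c, d]` and
`N = !![conj a, -conj c; -conj b, conj d]`, and let `δ_A(w) = A₁₀ w + A₁₁` be the denominator of
the map of `A`. Then `ψ = d / δ_M`, and comparing Taylor coefficients gives
`W K_w = γ(w) K_{σ(w)}` with `conj γ = conj d / δ_N`; square summability of these coefficients
forces `σ(𝔻) ⊆ 𝔻`. By the reproducing property `(W*W f)(w) = |d|² f(φ(σ(w))) / δ_{MN}(w)` and
`(WW* f)(w) = |d|² f(σ(φ(w))) / δ_{NM}(w)`. Testing with `f = K_0 = 1` at `w = 0` gives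
`|d|² - |c|² = |d|² - |b|²`. Conversely, if `|b| = |c|`, a fixed point on `∂𝔻` makes `M` and `N`
commute, so both the compositions and the denominators agree.
-/

open Topology FormalMultilinearSeries ContinuousLinearMap
open scoped InnerProduct

theorem ofScalars_radius_pos_of_norm_le {c : ℕ → ℂ} {C R : ℝ} (hR : 0 < R)
    (h : ∀ n, ‖c n‖ ≤ C * R ^ n) : 0 < (ofScalars ℂ c).radius := by
  refine lt_of_lt_of_le ?_
    ((ofScalars ℂ c).le_radius_of_bound C (r := R.toNNReal⁻¹) fun n => ?_)
  · simpa using hR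
  · rw [ofScalars_norm, NNReal.coe_inv, Real.coe_toNNReal _ hR.le, inv_pow]
    calc ‖c n‖ * (R ^ n)⁻¹ ≤ C * R ^ n * (R ^ n)⁻¹ := by gcongr; exact h n
      _ = C := by field_simp

theorem eq_of_tsum_mul_pow_eventuallyEq {c c' : ℕ → ℂ} (hc : 0 < (ofScalars ℂ c).radius)
    (hc' : 0 < (ofScalars ℂ c').radius)
    (h : ∀ᶠ z in 𝓝 0, ∑' n, c n * z ^ n = ∑' n, c' n * z ^ n) : c = c' := by
  refine ofScalars_series_injective (𝕜 := ℂ) (E := ℂ) ?_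
  refine ((ofScalars ℂ c).hasFPowerSeriesOnBall hc).hasFPowerSeriesAt
    |>.eq_formalMultilinearSeries_of_eventually
      ((ofScalars ℂ c').hasFPowerSeriesOnBall hc').hasFPowerSeriesAt ?_
  filter_upwards [h] with z hz
  simpa [FormalMultilinearSeries.sum, ofScalars_apply_eq, mul_comm] using hz

namespace H2

theorem ofScalars_radius_pos (f : H2) : 0 < (ofScalars ℂ (f : ℕ → ℂ)).radius :=
  ofScalars_radius_pos_of_norm_le (C := ‖f‖) one_pos fun n => by
    simpa using lp.norm_apply_le_norm two_ne_zero f n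

theorem ext_eval {f g : H2} (h : ∀ z : ℂ, ‖z‖ < 1 → eval f z = eval g z) : f = g := by
  refine lp.ext (eq_of_tsum_mul_pow_eventuallyEq f.ofScalars_radius_pos
    g.ofScalars_radius_pos ?_)
  filter_upwards [ball_mem_nhds (0 : ℂ) one_pos] with z hz
  exact h z (by simpa using hz)

theorem kernel_apply {w : ℂ} (hw : ‖w‖ < 1) (n : ℕ) : kernel w n = conj w ^ n := by
  rw [kernel, dif_pos hw]

theorem eval_kernel {w z : ℂ} (hw : ‖w‖ < 1) (hz : ‖z‖ < 1) : eval (kernel w) z = ker w z := by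
  have hwz : ‖conj w * z‖ < 1 := by
    rw [norm_mul, RCLike.norm_conj]
    nlinarith [norm_nonneg w, norm_nonneg z]
  simp only [eval, ker, kernel_apply hw, ← mul_pow, tsum_geometric_of_norm_lt_one hwz]

theorem eval_kernel_zero (z : ℂ) : eval (kernel 0) z = 1 := by
  have h0 : ‖(0 : ℂ)‖ < 1 := by simp
  rw [eval, tsum_eq_single 0 fun n hn => by simp [kernel_apply h0, hn]]
  simp [kernel_apply h0]

theorem inner_kernel {w : ℂ} (hw : ‖w‖ < 1) (f : H2) : ⟪kernel w, f⟫_ℂ = eval f w := by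
  simp only [lp.inner_eq_tsum, RCLike.inner_apply', kernel_apply hw, map_pow, conj_conj, eval,
    mul_comm]

theorem norm_lt_one_of_apply_eq_mul_pow {f : H2} {γ q : ℂ} (hγ : γ ≠ 0)
    (hf : ∀ n, f n = γ * q ^ n) : ‖q‖ < 1 := by
  have hsum : Summable fun n : ℕ => ‖γ‖ ^ 2 * (‖q‖ ^ 2) ^ n := by
    refine ((lp.memℓp f).summable (by norm_num)).congr fun n => ?_
    rw [hf, ENNReal.toReal_ofNat, Real.rpow_two, norm_mul, norm_pow, mul_pow, ← pow_mul,
      ← pow_mul, mul_comm n]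
  have hq := summable_geometric_iff_norm_lt_one.mp
    ((summable_mul_left_iff (by positivity)).mp hsum)
  rw [norm_pow, norm_norm] at hq
  exact (pow_lt_one_iff_of_nonneg (norm_nonneg q) two_ne_zero).mp hq

theorem eq_smul_kernel_of_eval_eq {f : H2} {γ q : ℂ} (hγ : γ ≠ 0)
    (h : ∀ u : ℂ, ‖u‖ < 1 → eval f u = γ * (1 - q * u)⁻¹) :
    ‖q‖ < 1 ∧ f = γ • kernel (conj q) := by
  have hq1 : 0 < ‖q‖ + 1 := by positivity
  have hf : (f : ℕ → ℂ) = fun n => γ * q ^ n := by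
    refine eq_of_tsum_mul_pow_eventuallyEq f.ofScalars_radius_pos
      (ofScalars_radius_pos_of_norm_le (C := ‖γ‖) hq1 fun n => ?_) ?_
    · rw [norm_mul, norm_pow]
      gcongr
      linarith
    · filter_upwards [ball_mem_nhds (0 : ℂ) (lt_min one_pos (one_div_pos.mpr hq1))] with u hu
      rw [mem_ball_zero_iff, lt_min_iff, lt_div_iff₀ hq1] at hu
      have hqu : ‖q * u‖ < 1 := by
        rw [norm_mul]
        nlinarith [norm_nonneg u]
      refine (h u hu.1).trans ?_
      rw [← tsum_geometric_of_norm_lt_one hqu, ← tsum_mul_left]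
      simp only [mul_pow, mul_assoc]
  have hq : ‖q‖ < 1 := norm_lt_one_of_apply_eq_mul_pow hγ (congrFun hf)
  refine ⟨hq, lp.ext (funext fun n => ?_)⟩
  rw [hf, lp.coeFn_smul, Pi.smul_apply, kernel_apply (by rwa [RCLike.norm_conj]), conj_conj,
    smul_eq_mul]

namespace IsWCompOp

variable {ψ φ σ γ : ℂ → ℂ} {W : H2 →L[ℂ] H2}

theorem eval_adjoint_comp_apply (hW : IsWCompOp ψ φ W)
    (hK : ∀ w : ℂ, ‖w‖ < 1 → ‖σ w‖ < 1 ∧ W (kernel w) = γ w • kernel (σ w))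
    {w : ℂ} (hw : ‖w‖ < 1) (f : H2) :
    eval ((W†) (W f)) w = conj (γ w) * ψ (σ w) * eval f (φ (σ w)) := by
  obtain ⟨hσw, hWw⟩ := hK w hw
  rw [← inner_kernel hw, adjoint_inner_right, hWw, inner_smul_left, inner_kernel hσw,
    hW f _ hσw, mul_assoc]

theorem eval_comp_adjoint_apply (hW : IsWCompOp ψ φ W)
    (hK : ∀ w : ℂ, ‖w‖ < 1 → ‖σ w‖ < 1 ∧ W (kernel w) = γ w • kernel (σ w))
    {w : ℂ} (hw : ‖w‖ < 1) (hφw : ‖φ w‖ < 1) (f : H2) :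
    eval (W ((W†) f)) w = ψ w * conj (γ (φ w)) * eval f (σ (φ w)) := by
  obtain ⟨hσφw, hWφw⟩ := hK (φ w) hφw
  rw [hW _ w hw, ← inner_kernel hφw, adjoint_inner_right, hWφw, inner_smul_left,
    inner_kernel hσφw, mul_assoc]

theorem isNormalOp_iff (hW : IsWCompOp ψ φ W) (hφ : ∀ z : ℂ, ‖z‖ < 1 → ‖φ z‖ < 1)
    (hK : ∀ w : ℂ, ‖w‖ < 1 → ‖σ w‖ < 1 ∧ W (kernel w) = γ w • kernel (σ w)) :
    IsNormalOp W ↔ ∀ f : H2, ∀ w : ℂ, ‖w‖ < 1 →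
      conj (γ w) * ψ (σ w) * eval f (φ (σ w)) = ψ w * conj (γ (φ w)) * eval f (σ (φ w)) := by
  rw [IsNormalOp, ContinuousLinearMap.ext_iff]
  refine ⟨fun h f w hw => ?_, fun h f => ext_eval fun w hw => ?_⟩
  · rw [← eval_adjoint_comp_apply hW hK hw, ← eval_comp_adjoint_apply hW hK hw (hφ w hw)]
    exact congrArg (eval · w) (h f)
  · rw [comp_apply, comp_apply, eval_adjoint_comp_apply hW hK hw,
      eval_comp_adjoint_apply hW hK hw (hφ w hw), h f w hw]

end IsWCompOp

end H2

section LinearFractional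

variable {M N : Matrix (Fin 2) (Fin 2) ℂ} {z : ℂ}

def linFracDenom (M : Matrix (Fin 2) (Fin 2) ℂ) (z : ℂ) : ℂ := M 1 0 * z + M 1 1

def linFrac (M : Matrix (Fin 2) (Fin 2) ℂ) (z : ℂ) : ℂ :=
  (M 0 0 * z + M 0 1) / linFracDenom M z

def linFracWeight (M : Matrix (Fin 2) (Fin 2) ℂ) (z : ℂ) : ℂ := M 1 1 / linFracDenom M z

theorem linFracDenom_of (a b c d z : ℂ) : linFracDenom !![a, b; c, d] z = c * z + d := rfl

theorem linFrac_of (a b c d z : ℂ) : linFrac !![a, b; c, d] z = (a * z + b) / (c * z + d) :=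
  rfl

theorem linFracWeight_of (a b c d z : ℂ) : linFracWeight !![a, b; c, d] z = d / (c * z + d) :=
  rfl

theorem linFracDenom_ne_zero (hM : ‖M 1 0‖ < ‖M 1 1‖) (hz : ‖z‖ < 1) :
    linFracDenom M z ≠ 0 := by
  intro h
  have h11 : ‖M 1 1‖ = ‖M 1 0‖ * ‖z‖ := by
    rw [← norm_mul, ← norm_neg, eq_neg_of_add_eq_zero_right h, neg_neg]
  nlinarith [norm_nonneg (M 1 0), norm_nonneg z]

theorem row_linFrac_mul_linFracDenom (N : Matrix (Fin 2) (Fin 2) ℂ) (i : Fin 2)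
    (h : linFracDenom M z ≠ 0) :
    (N i 0 * linFrac M z + N i 1) * linFracDenom M z = (N * M) i 0 * z + (N * M) i 1 := by
  rw [add_mul, linFrac, mul_assoc, div_mul_cancel₀ _ h]
  simp only [linFracDenom, Matrix.mul_apply, Fin.sum_univ_two]
  ring

theorem linFracDenom_linFrac_mul (N : Matrix (Fin 2) (Fin 2) ℂ) (h : linFracDenom M z ≠ 0) :
    linFracDenom N (linFrac M z) * linFracDenom M z = linFracDenom (N * M) z :=
  row_linFrac_mul_linFracDenom N 1 h

theorem linFrac_linFrac (N : Matrix (Fin 2) (Fin 2) ℂ) (h : linFracDenom M z ≠ 0) :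
    linFrac N (linFrac M z) = linFrac (N * M) z := by
  rw [linFrac, ← mul_div_mul_right _ _ h, row_linFrac_mul_linFracDenom N 0 h,
    linFracDenom_linFrac_mul N h, linFrac]

theorem linFracWeight_linFrac_mul (N : Matrix (Fin 2) (Fin 2) ℂ) (h : linFracDenom M z ≠ 0) :
    linFracWeight N (linFrac M z) * linFracWeight M z =
      N 1 1 * M 1 1 / linFracDenom (N * M) z := by
  rw [linFracWeight, linFracWeight, div_mul_div_comm, linFracDenom_linFrac_mul N h]

theorem linFracWeight_mul_comm_iff (hM : linFracDenom M z ≠ 0) (hN : linFracDenom N z ≠ 0)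
    (h11 : M 1 1 * N 1 1 ≠ 0) :
    linFracWeight M z * linFracWeight N (linFrac M z) =
        linFracWeight N z * linFracWeight M (linFrac N z) ↔
      linFracDenom (N * M) z = linFracDenom (M * N) z := by
  rw [mul_comm, linFracWeight_linFrac_mul N hM, mul_comm (linFracWeight N z),
    linFracWeight_linFrac_mul M hN, mul_comm (N 1 1), div_eq_mul_inv, div_eq_mul_inv,
    mul_right_inj' h11, inv_inj]

end LinearFractional

theorem commute_of_fixed_point {a b c d ζ : ℂ} (hζ : ‖ζ‖ = 1)
    (hfix : (a * ζ + b) / (c * ζ + d) = ζ) (hbc : ‖b‖ = ‖c‖) :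
    Commute !![a, b; c, d] !![conj a, -conj c; -conj b, conj d] := by
  have hζζ : ζ * conj ζ = 1 := by
    rw [mul_conj', hζ]
    norm_num
  have hbb : b * conj b = c * conj c := by rw [mul_conj', mul_conj', hbc]
  have hden : c * ζ + d ≠ 0 := by
    rintro h
    rw [h, div_zero] at hfix
    simp [← hfix] at hζ
  have hb : b = ζ * (c * ζ + (d - a)) := by
    rw [div_eq_iff hden] at hfix
    linear_combination hfix
  have hb' : conj b = conj ζ * (conj c * conj ζ + (conj d - conj a)) := by
    simp only [hb, map_mul, map_add, map_sub]
  have hX : (c * ζ + (d - a)) * (conj c * conj ζ + (conj d - conj a)) = c * conj c := by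
    rw [hb', hb] at hbb
    linear_combination hbb - (c * ζ + (d - a)) * (conj c * conj ζ + (conj d - conj a)) * hζζ
  have hE : conj c * (a - d) + b * (conj a - conj d) = 0 := by
    linear_combination (-ζ) * hX + (ζ * c * conj c + conj c * (d - a)) * hζζ
      + (conj a - conj d) * hb
  have hE' : c * (conj a - conj d) + conj b * (a - d) = 0 := by
    simpa using congrArg conj hE
  have h00 : a * conj a + b * -conj b = conj a * a + -conj c * c := by
    linear_combination -hbb
  have h01 : a * -conj c + b * conj d = conj a * b + -conj c * d := by
    linear_combination -hE
  have h10 : c * conj a + d * -conj b = -conj b * a + conj d * c := by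
    linear_combination hE'
  have h11 : c * -conj c + d * conj d = -conj b * b + conj d * d := by
    linear_combination hbb
  rw [Commute, SemiconjBy, Matrix.mul_fin_two, Matrix.mul_fin_two, h00, h01, h10, h11]

theorem ker_linFrac_zero {a b c d : ℂ} (hd : d ≠ 0) (z : ℂ) :
    H2.ker (linFrac !![conj a, -conj c; -conj b, conj d] 0) z = linFracWeight !![a, b; c, d] z := by
  rw [linFracWeight_of, linFrac_of, H2.ker]
  simp only [mul_zero, zero_add, map_div₀, map_neg, conj_conj]
  field_simp
  ring

theorem norm_eq_of_linFracDenom_mul_zero {a b c d : ℂ}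
    (h : linFracDenom (!![a, b; c, d] * !![conj a, -conj c; -conj b, conj d]) 0 =
      linFracDenom (!![conj a, -conj c; -conj b, conj d] * !![a, b; c, d]) 0) :
    ‖b‖ = ‖c‖ := by
  rw [Matrix.mul_fin_two, Matrix.mul_fin_two, linFracDenom_of, linFracDenom_of] at h
  have hsq : ((‖b‖ ^ 2 : ℝ) : ℂ) = ((‖c‖ ^ 2 : ℝ) : ℂ) := by
    push_cast
    rw [← mul_conj', ← mul_conj']
    linear_combination h
  exact (pow_left_inj₀ (norm_nonneg _) (norm_nonneg _) two_ne_zero).mp (ofReal_inj.mp hsq)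

theorem apply_kernel_eq_smul {a b c d w : ℂ} {W : H2 →L[ℂ] H2}
    (hW : H2.IsWCompOp (linFracWeight !![a, b; c, d]) (linFrac !![a, b; c, d]) W)
    (hden : ∀ z : ℂ, ‖z‖ < 1 → c * z + d ≠ 0)
    (hself : ∀ z : ℂ, ‖z‖ < 1 → ‖linFrac !![a, b; c, d] z‖ < 1) (hbd : ‖b‖ < ‖d‖)
    (hw : ‖w‖ < 1) :
    ‖linFrac !![conj a, -conj c; -conj b, conj d] w‖ < 1 ∧
      W (H2.kernel w) = conj (linFracWeight !![conj a, -conj c; -conj b, conj d] w) •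
        H2.kernel (linFrac !![conj a, -conj c; -conj b, conj d] w) := by
  have hd : d ≠ 0 := by simpa using hden 0 (by simp)
  have hdb : d - conj w * b ≠ 0 := by
    refine sub_ne_zero.mpr fun h => ?_
    have hlt : ‖conj w * b‖ < ‖d‖ := by
      rw [norm_mul, RCLike.norm_conj]
      nlinarith [norm_nonneg w, norm_nonneg b]
    exact hlt.ne (congrArg norm h).symm
  have hγ : conj (linFracWeight !![conj a, -conj c; -conj b, conj d] w) =
      d / (d - conj w * b) := by
    rw [linFracWeight_of]
    simp only [map_div₀, map_add, map_mul, map_neg, conj_conj]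
    ring
  have hq : conj (linFrac !![conj a, -conj c; -conj b, conj d] w) =
      (a * conj w - c) / (d - conj w * b) := by
    rw [linFrac_of]
    simp only [map_div₀, map_add, map_mul, map_neg, conj_conj]
    ring
  rw [← conj_conj (linFrac _ w), RCLike.norm_conj, hγ, hq]
  refine H2.eq_smul_kernel_of_eval_eq (div_ne_zero hd hdb) fun u hu => ?_
  have hcu := hden u hu
  rw [hW _ u hu, H2.eval_kernel hw (hself u hu), linFracWeight_of, linFrac_of, H2.ker]
  field_simp
  ring

theorem stmt19_general (a b c d : ℂ)
    (φ : ℂ → ℂ) (hφ : ∀ z : ℂ, φ z = (a * z + b) / (c * z + d))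
    (hden : ∀ z : ℂ, ‖z‖ < 1 → c * z + d ≠ 0)
    (hself : ∀ z : ℂ, ‖z‖ < 1 → ‖φ z‖ < 1)
    (hfix : ∃ ζ : ℂ, ‖ζ‖ = 1 ∧ (a * ζ + b) / (c * ζ + d) = ζ)
    (σ : ℂ → ℂ) (hσ : ∀ z : ℂ, σ z = (conj a * z - conj c) / (-(conj b) * z + conj d))
    (ψ : ℂ → ℂ) (hψ : ∀ z : ℂ, ψ z = H2.ker (σ 0) z)
    (W : H2 →L[ℂ] H2) (hW : H2.IsWCompOp ψ φ W) :
    H2.IsNormalOp W ↔ ‖b‖ = ‖c‖ := by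
  have hd : d ≠ 0 := by simpa using hden 0 (by simp)
  have hbd : ‖b‖ < ‖d‖ := by
    simpa [hφ, norm_div, div_lt_one (norm_pos_iff.mpr hd)] using hself 0 (by simp)
  obtain rfl : φ = linFrac !![a, b; c, d] := funext hφ
  obtain rfl : σ = linFrac !![conj a, -conj c; -conj b, conj d] :=
    funext fun z => by rw [hσ, linFrac_of, neg_mul, sub_eq_add_neg]
  obtain rfl : ψ = linFracWeight !![a, b; c, d] :=
    funext fun z => (hψ z).trans (ker_linFrac_zero hd z)
  have hφden (z : ℂ) (hz : ‖z‖ < 1) : linFracDenom !![a, b; c, d] z ≠ 0 := hden z hz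
  have hσden (z : ℂ) (hz : ‖z‖ < 1) :
      linFracDenom !![conj a, -conj c; -conj b, conj d] z ≠ 0 :=
    linFracDenom_ne_zero (by simpa using hbd) hz
  have hdd : conj d * d ≠ 0 := mul_ne_zero ((map_ne_zero _).mpr hd) hd
  rw [H2.IsWCompOp.isNormalOp_iff hW hself fun w hw => apply_kernel_eq_smul hW hden hself hbd hw]
  simp only [conj_conj]
  constructor
  · intro h
    have h0 := h (H2.kernel 0) 0 (by simp)
    rw [H2.eval_kernel_zero, H2.eval_kernel_zero, mul_one, mul_one,
      linFracWeight_mul_comm_iff (hσden 0 (by simp)) (hφden 0 (by simp)) hdd] at h0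
    exact norm_eq_of_linFracDenom_mul_zero h0
  · intro hbc f w hw
    obtain ⟨ζ, hζ, hζfix⟩ := hfix
    have hcomm := commute_of_fixed_point hζ hζfix hbc
    rw [(linFracWeight_mul_comm_iff (hσden w hw) (hφden w hw) hdd).mpr (by rw [hcomm.eq]),
      linFrac_linFrac _ (hσden w hw), linFrac_linFrac _ (hφden w hw), hcomm.eq]

/-- Lemma (Jiang et al.): let `φ` be a linear fractional self-map of `𝔻` with a fixed point
on `∂𝔻` and `ψ = K_{σ(0)}`. Then `W_{ψ,φ}` is normal on `H²` iff `|b| = |c|`. -/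
theorem stmt19 (a b c d : ℂ)
    (φ : ℂ → ℂ) (hφ : ∀ z : ℂ, φ z = (a * z + b) / (c * z + d))
    (hdet : a * d - b * c ≠ 0)
    (hden : ∀ z : ℂ, ‖z‖ < 1 → c * z + d ≠ 0)
    (hself : ∀ z : ℂ, ‖z‖ < 1 → ‖φ z‖ < 1)
    (hfix : ∃ ζ : ℂ, ‖ζ‖ = 1 ∧ (a * ζ + b) / (c * ζ + d) = ζ)
    (σ : ℂ → ℂ) (hσ : ∀ z : ℂ, σ z = (conj a * z - conj c) / (-(conj b) * z + conj d))
    (ψ : ℂ → ℂ) (hψ : ∀ z : ℂ, ψ z = H2.ker (σ 0) z)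
    (W : H2 →L[ℂ] H2) (hW : H2.IsWCompOp ψ φ W) :
    H2.IsNormalOp W ↔ ‖b‖ = ‖c‖ :=
  stmt19_general a b c d φ hφ hden hself hfix σ hσ ψ hψ W hW
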